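/- arXiv:0910.4443 — 3 statements merged into one kernel-verified Lean document; each statement's English description precedes it below -/
import Mathlib

section
/- Let R0 > 0. If R0 > 1, then there exists a unique z ∈ (0,1) satisfying 1 − z = exp(−R0 z). If R0 ≤ 1, then no z ∈ (0,1) satisfies 1 − z = exp(−R0 z) (so z = 0 is the only solution in [0,1)). -/
/-!
The gap `g(z) = 1 - z - exp (-R₀ z)` is strictly concave with `g 0 = 0`, so it has at most one
zero in `(0, ∞)`. For `R₀ ≤ 1` there is none, since `exp (-R₀ z) ≥ exp (-z) > 1 - z`. For `R₀ > 1`,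
`exp (-x) ≤ 1 / (1 + x)` makes `g` positive at some `c ∈ (0, 1)`, while `g 1 = -exp (-R₀) < 0`,
and the intermediate value theorem gives the zero.
-/

open Real Set

theorem StrictConcaveOn.eq_of_apply_eq_of_lt {s : Set ℝ} {f : ℝ → ℝ}
    (hf : StrictConcaveOn ℝ s f) {x a b : ℝ} (hx : x ∈ s) (ha : a ∈ s) (hb : b ∈ s)
    (hxa : x < a) (hxb : x < b) (hfa : f a = f x) (hfb : f b = f x) : a = b := by
  wlog hab : a < b generalizing a b
  · rcases (not_lt.1 hab).eq_or_lt with h | h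
    · exact h.symm
    · exact (this hb ha hxb hxa hfb hfa h).symm
  have ha_mem : a ∈ openSegment ℝ x b := by
    rw [openSegment_eq_Ioo hxb]
    exact ⟨hxa, hab⟩
  have hmin := hf.lt_on_openSegment hx hb hxb.ne ha_mem
  rw [hfb, min_self, hfa] at hmin
  exact (lt_irrefl _ hmin).elim

theorem strictConvexOn_exp_mul {c : ℝ} (hc : c ≠ 0) :
    StrictConvexOn ℝ univ fun x ↦ exp (c * x) := by
  refine ⟨convex_univ, fun x _ y _ hxy a b ha hb hab ↦ ?_⟩
  have hcxy : c * x ≠ c * y := by simpa [hc] using hxy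
  convert strictConvexOn_exp.2 (mem_univ _) (mem_univ _) hcxy ha hb hab using 2
  simp only [smul_eq_mul]
  ring

theorem one_sub_lt_exp_neg_mul {R z : ℝ} (hR : R ≤ 1) (hz : 0 < z) : 1 - z < exp (-R * z) :=
  calc 1 - z < exp (-z) := by linarith [add_one_lt_exp (neg_ne_zero.2 hz.ne')]
    _ ≤ exp (-R * z) := exp_le_exp.2 (by nlinarith)

theorem exp_neg_mul_lt_one_sub {R c : ℝ} (hc : c ∈ Ioo 0 1) (h : 1 < R * (1 - c)) :
    exp (-R * c) < 1 - c := by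
  obtain ⟨hc0, hc1⟩ := hc
  have hRc : 0 < R * c := mul_pos (by nlinarith) hc0
  calc exp (-R * c) = (exp (R * c))⁻¹ := by rw [neg_mul, exp_neg]
    _ ≤ (1 + R * c)⁻¹ := inv_anti₀ (by positivity) (by linarith [add_one_le_exp (R * c)])
    _ < 1 - c := by
      rw [inv_lt_iff_one_lt_mul₀ (by positivity)]
      nlinarith

noncomputable def finalSizeGap (R z : ℝ) : ℝ := 1 - z - exp (-R * z)

theorem finalSizeGap_eq_zero_iff {R z : ℝ} : finalSizeGap R z = 0 ↔ 1 - z = exp (-R * z) :=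
  sub_eq_zero

theorem finalSizeGap_zero (R : ℝ) : finalSizeGap R 0 = 0 := by
  simp [finalSizeGap]

theorem continuous_finalSizeGap (R : ℝ) : Continuous (finalSizeGap R) := by
  unfold finalSizeGap
  fun_prop

theorem strictConcaveOn_finalSizeGap {R : ℝ} (hR : R ≠ 0) :
    StrictConcaveOn ℝ univ (finalSizeGap R) :=
  ((concaveOn_const 1 convex_univ).sub (convexOn_id convex_univ)).sub_strictConvexOn
    (strictConvexOn_exp_mul (neg_ne_zero.2 hR))

theorem exists_finalSizeGap_eq_zero {R : ℝ} (hR : 1 < R) :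
    ∃ z ∈ Ioo (0 : ℝ) 1, finalSizeGap R z = 0 := by
  set c := (R - 1) / (2 * R)
  have hc : c ∈ Ioo 0 1 := ⟨by positivity, by rw [div_lt_one (by positivity)]; linarith⟩
  have hgap_c : 0 < finalSizeGap R c := by
    have : 1 < R * (1 - c) := by
      rw [show R * (1 - c) = (R + 1) / 2 by simp only [c]; field_simp; ring]
      linarith
    simpa [finalSizeGap] using exp_neg_mul_lt_one_sub hc this
  have hgap_one : finalSizeGap R 1 < 0 := by simp [finalSizeGap, exp_pos]
  obtain ⟨z, hz, hz0⟩ := intermediate_value_Ioo' hc.2.le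
    (continuous_finalSizeGap R).continuousOn ⟨hgap_one, hgap_c⟩
  exact ⟨z, ⟨hc.1.trans hz.1, hz.2⟩, hz0⟩

theorem final_size_equation_positive_solution_general
    (R0 : ℝ) :
    (1 < R0 → ∃! z : ℝ, z ∈ Set.Ioo (0:ℝ) 1 ∧ 1 - z = Real.exp (-R0 * z)) ∧
      (R0 ≤ 1 → ∀ z ∈ Set.Ioo (0:ℝ) 1, 1 - z ≠ Real.exp (-R0 * z)) := by
  refine ⟨fun hR ↦ ?_, fun hR z hz ↦ (one_sub_lt_exp_neg_mul hR hz.1).ne⟩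
  simp only [← finalSizeGap_eq_zero_iff]
  obtain ⟨z, hz, hz0⟩ := exists_finalSizeGap_eq_zero hR
  refine ⟨z, ⟨hz, hz0⟩, fun y ⟨hy, hy0⟩ ↦ ?_⟩
  rw [← finalSizeGap_zero R0] at hz0 hy0
  exact (strictConcaveOn_finalSizeGap (by positivity)).eq_of_apply_eq_of_lt (mem_univ 0)
    (mem_univ y) (mem_univ z) hy.1 hz.1 hy0 hz0

/-- The final size equation `1 - z = exp (-R0 z)` has a unique solution in `(0,1)`
when `R0 > 1`, and no solution in `(0,1)` when `R0 ≤ 1`. -/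
theorem final_size_equation_positive_solution
    (R0 : ℝ) (hR0 : 0 < R0) :
    (1 < R0 → ∃! z : ℝ, z ∈ Set.Ioo (0:ℝ) 1 ∧ 1 - z = Real.exp (-R0 * z)) ∧
      (R0 ≤ 1 → ∀ z ∈ Set.Ioo (0:ℝ) 1, 1 - z ≠ Real.exp (-R0 * z)) :=
  final_size_equation_positive_solution_general R0
end

section
/- Let R0 > 1 and let z ∈ (0,1) satisfy the final size equation 1 − z = exp(−R0 z). Then R0 (1 − z) < 1. -/
open Real

/- With x = R0 z ≠ 0, the equation says e^x (1 - z) = 1, so the strict inequality e^x > 1 + x gives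
(1 + R0 z)(1 - z) < 1, i.e. z (R0 (1 - z) - 1) < 0. -/

theorem final_size_subcriticality_general
    (R0 z : ℝ) (hz : z ∈ Set.Ioo (0:ℝ) 1)
    (hbal : 1 - z = Real.exp (-R0 * z)) :
    R0 * (1 - z) < 1 := by
  have hz0 : 0 < z := hz.1
  have hx : R0 * z ≠ 0 := by
    intro h
    rw [neg_mul, h, neg_zero, exp_zero] at hbal
    linarith
  have hsurv : 0 < 1 - z := hbal ▸ exp_pos _
  have key : (1 + R0 * z) * (1 - z) < 1 :=
    calc (1 + R0 * z) * (1 - z) < exp (R0 * z) * (1 - z) := by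
          gcongr
          linarith [add_one_lt_exp hx]
      _ = 1 := by rw [hbal, ← exp_add, neg_mul, add_neg_cancel, exp_zero]
  have hneg : z * (R0 * (1 - z) - 1) < 0 := by linarith
  linarith [neg_of_mul_neg_right hneg hz0.le]

/-- If `z ∈ (0,1)` solves the final size equation `1 - z = exp (-R0 z)` with
`R0 > 1`, then `R0 (1 - z) < 1` (subcriticality of the end phase). -/
theorem final_size_subcriticality
    (R0 z : ℝ) (hR0 : 1 < R0) (hz : z ∈ Set.Ioo (0:ℝ) 1)
    (hbal : 1 - z = Real.exp (-R0 * z)) :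
    R0 * (1 - z) < 1 :=
  final_size_subcriticality_general R0 z hz hbal
end

section
/- Let m ≥ 1, k ≥ 0, λ' > 0 and θ ≥ 0. Let I₁, …, I_{m+k} be i.i.d. nonnegative random variables with Laplace transform φ(u) = E[exp(−u I₁)], let Z be a random variable taking values in {0, 1, …, k}, and set A = λ' · Σ_{i=1}^{m+Z} I_i. Assume that for each j ∈ {0, …, k} the random vector (I_{m+j+1}, …, I_{m+k}) is independent of the pair consisting of the indicator of {Z = j} and the vector (I₁, …, I_{m+j}). Then Wald's identity holds: E[ exp(−θ A) / (φ(θ λ'))^{m+Z} ] = 1. -/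
/-!
Put `Y i = exp (-θ λ' I i)`, so that `exp (-θ A) = ∏_{i < m + Z} Y i` and `E[Y i] = φ (θ λ')`.
On `{Z = j}` complete this product by the factors of the `k - j` escaping individuals: they are
independent of `1{Z = j} ∏_{i < m + j} Y i` and their product has mean `φ (θ λ') ^ (k - j)`, so
`E[1{Z = j} ∏_{i < m + j} Y i] / φ ^ (m + j) = E[1{Z = j} ∏_i Y i] / φ ^ (m + k)`.
Summing over `j` leaves `E[∏_i Y i] / φ ^ (m + k) = 1`.
-/

open MeasureTheory ProbabilityTheory Finset

def headProd {n : ℕ} (x : Fin n → ℝ) (j : ℕ) : ℝ := ∏ i : Fin n, if (i : ℕ) < j then x i else 1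

def tailProd {n : ℕ} (x : Fin n → ℝ) (j : ℕ) : ℝ := ∏ i : Fin n, if (i : ℕ) < j then 1 else x i

section Products

variable {n : ℕ}

lemma headProd_mul_tailProd (x : Fin n → ℝ) (j : ℕ) :
    headProd x j * tailProd x j = ∏ i, x i := by
  rw [headProd, tailProd, ← prod_mul_distrib]
  exact prod_congr rfl fun i _ => by split_ifs <;> simp

lemma headProd_eq_prod_fin {j : ℕ} (h : j ≤ n) (x : Fin n → ℝ) :
    headProd x j = ∏ i : Fin j, x ⟨i, by omega⟩ := by
  obtain ⟨q, rfl⟩ := Nat.exists_eq_add_of_le h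
  simp only [headProd, Fin.prod_univ_add, Fin.val_castAdd, Fin.is_lt, ↓reduceIte, Fin.val_natAdd,
    add_lt_iff_neg_left, not_lt_zero, prod_const_one, mul_one]
  rfl

lemma tailProd_eq_prod_fin {j q : ℕ} (h : j + q = n) (x : Fin n → ℝ) :
    tailProd x j = ∏ i : Fin q, x ⟨j + i, by omega⟩ := by
  subst h
  simp only [tailProd, Fin.prod_univ_add, Fin.val_castAdd, Fin.is_lt, ↓reduceIte, prod_const_one,
    Fin.val_natAdd, add_lt_iff_neg_left, not_lt_zero, one_mul]
  rfl

lemma abs_headProd_le_one {x : Fin n → ℝ} (hx : ∀ i, |x i| ≤ 1) (j : ℕ) :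
    |headProd x j| ≤ 1 := by
  rw [headProd, abs_prod]
  exact prod_le_one (fun _ _ => abs_nonneg _) fun i _ => by split_ifs <;> simp [hx]

@[fun_prop]
lemma measurable_headProd (j : ℕ) : Measurable fun x : Fin n → ℝ => headProd x j :=
  Finset.measurable_prod _ fun i _ => by split_ifs <;> fun_prop

@[fun_prop]
lemma measurable_tailProd (j : ℕ) : Measurable fun x : Fin n → ℝ => tailProd x j :=
  Finset.measurable_prod _ fun i _ => by split_ifs <;> fun_prop

lemma exp_neg_mul_sum_ite_eq_headProd (a : ℝ) (x : Fin n → ℝ) (j : ℕ) :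
    Real.exp (-a * ∑ i : Fin n, if (i : ℕ) < j then x i else 0) =
      headProd (fun i => Real.exp (-a * x i)) j := by
  rw [Finset.mul_sum, Real.exp_sum, headProd]
  exact prod_congr rfl fun i _ => by split_ifs <;> simp

lemma ProbabilityTheory.IndepFun.tailProd_mul_headProd {Ω : Type*} [MeasurableSpace Ω]
    {P : Measure Ω} {j q : ℕ} (hjq : j + q = n) {I : Fin n → Ω → ℝ} {B : Ω → ℝ}
    (hindep : IndepFun (fun ω (i : Fin q) => I ⟨j + i, by omega⟩ ω)
      (fun ω => (B ω, fun i : Fin j => I ⟨i, by omega⟩ ω)) P)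
    {f : ℝ → ℝ} (hf : Measurable f) :
    IndepFun (fun ω => tailProd (fun i => f (I i ω)) j)
      (fun ω => B ω * headProd (fun i => f (I i ω)) j) P := by
  convert hindep.comp (φ := fun v => ∏ i, f (v i)) (ψ := fun p => p.1 * ∏ i, f (p.2 i))
    (by fun_prop) (by fun_prop) using 1
  · funext ω
    simp [tailProd_eq_prod_fin hjq]
  · funext ω
    simp [headProd_eq_prod_fin (show j ≤ n by omega)]

end Products

lemma integral_eq_sum_ite_mul {Ω : Type*} [MeasurableSpace Ω] {P : Measure Ω}
    {n : ℕ} {N : Ω → ℕ} (hN : ∀ ω, N ω ≤ n) {g : ℕ → Ω → ℝ}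
    (hg : ∀ j ≤ n, Integrable (fun ω => (if N ω = j then 1 else 0) * g j ω) P) :
    ∫ ω, g (N ω) ω ∂P = ∑ j ∈ range (n + 1), ∫ ω, (if N ω = j then 1 else 0) * g j ω ∂P := by
  rw [← integral_finsetSum _ fun j hj => hg j (Nat.lt_succ_iff.mp (mem_range.mp hj))]
  congr 1 with ω
  simp [ite_mul, Nat.lt_succ_iff.mpr (hN ω)]

section Wald

variable {Ω : Type*} [MeasurableSpace Ω] {P : Measure Ω} [IsProbabilityMeasure P]
  {n : ℕ} {Y : Fin n → Ω → ℝ} {c : ℝ}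

lemma integral_tailProd (hY : iIndepFun Y P) (hYm : ∀ i, AEMeasurable (Y i) P)
    (hc : ∀ i, ∫ ω, Y i ω ∂P = c) {j : ℕ} (hj : j ≤ n) :
    ∫ ω, tailProd (Y · ω) j ∂P = c ^ (n - j) := by
  have hprod := hY.integral_fun_prod_comp
    (f := fun (i : Fin n) (x : ℝ) => if (i : ℕ) < j then 1 else x) hYm
    fun i => by split_ifs <;> fun_prop
  calc ∫ ω, tailProd (Y · ω) j ∂P = ∏ i : Fin n, if (i : ℕ) < j then 1 else c := by
        refine hprod.trans (prod_congr rfl fun i _ => ?_)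
        split_ifs <;> simp [hc]
    _ = c ^ (n - j) := (tailProd_eq_prod_fin (Nat.add_sub_of_le hj) fun _ => c).trans (by simp)

lemma integrable_ite_mul_headProd (hYm : ∀ i, AEMeasurable (Y i) P)
    (hY1 : ∀ i ω, |Y i ω| ≤ 1) {N : Ω → ℕ} (hN : Measurable N) (j j' : ℕ) :
    Integrable (fun ω => (if N ω = j then 1 else 0) * headProd (Y · ω) j') P := by
  refine .of_bound ?_ 1 (ae_of_all _ fun ω => ?_)
  · have hind : Measurable fun ω => if N ω = j then (1 : ℝ) else 0 :=
      measurable_const.ite (hN (measurableSet_singleton j)) measurable_const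
    exact (hind.aemeasurable.mul ((measurable_headProd j').comp_aemeasurable
      (aemeasurable_pi_lambda _ hYm))).aestronglyMeasurable
  · rw [Real.norm_eq_abs, abs_mul]
    exact mul_le_one₀ (by split_ifs <;> simp) (abs_nonneg _) (abs_headProd_le_one (hY1 · ω) j')

lemma integral_ite_mul_headProd_mul_pow (hY : iIndepFun Y P) (hYm : ∀ i, AEMeasurable (Y i) P)
    (hY1 : ∀ i ω, |Y i ω| ≤ 1) (hc : ∀ i, ∫ ω, Y i ω ∂P = c) {N : Ω → ℕ} (hN : Measurable N)
    {j : ℕ} (hj : j ≤ n)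
    (hindep : IndepFun (fun ω => tailProd (Y · ω) j)
      (fun ω => (if N ω = j then 1 else 0) * headProd (Y · ω) j) P) :
    (∫ ω, (if N ω = j then 1 else 0) * headProd (Y · ω) j ∂P) * c ^ (n - j) =
      ∫ ω, (if N ω = j then 1 else 0) * ∏ i, Y i ω ∂P := by
  have htail : AEStronglyMeasurable (fun ω => tailProd (Y · ω) j) P :=
    ((measurable_tailProd j).comp_aemeasurable (aemeasurable_pi_lambda _ hYm)).aestronglyMeasurable
  calc (∫ ω, (if N ω = j then 1 else 0) * headProd (Y · ω) j ∂P) * c ^ (n - j)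
      = ∫ ω, tailProd (Y · ω) j * ((if N ω = j then 1 else 0) * headProd (Y · ω) j) ∂P := by
        rw [hindep.integral_fun_mul_eq_mul_integral htail
          (integrable_ite_mul_headProd hYm hY1 hN j j).aestronglyMeasurable,
          integral_tailProd hY hYm hc hj, mul_comm]
    _ = ∫ ω, (if N ω = j then 1 else 0) * ∏ i, Y i ω ∂P := by
        simp_rw [← headProd_mul_tailProd (Y · _) j]
        congr 1 with ω
        ring

theorem integral_headProd_div_pow_eq_one (hY : iIndepFun Y P) (hYm : ∀ i, AEMeasurable (Y i) P)
    (hY1 : ∀ i ω, |Y i ω| ≤ 1) (hc : ∀ i, ∫ ω, Y i ω ∂P = c) (hc0 : c ≠ 0) {N : Ω → ℕ}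
    (hN : Measurable N) (hNn : ∀ ω, N ω ≤ n)
    (hindep : ∀ j ≤ n, IndepFun (fun ω => tailProd (Y · ω) j)
      (fun ω => (if N ω = j then 1 else 0) * headProd (Y · ω) j) P) :
    ∫ ω, headProd (Y · ω) (N ω) / c ^ N ω ∂P = 1 := by
  have hprod : ∫ ω, ∏ i, Y i ω ∂P = c ^ n := by
    simp [hY.integral_fun_prod_eq_prod_integral fun i => (hYm i).aestronglyMeasurable, hc]
  calc ∫ ω, headProd (Y · ω) (N ω) / c ^ N ω ∂P
      = ∑ j ∈ range (n + 1), ∫ ω, (if N ω = j then 1 else 0) * (headProd (Y · ω) j / c ^ j) ∂P :=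
        integral_eq_sum_ite_mul (g := fun j ω => headProd (Y · ω) j / c ^ j) hNn fun j _ => by
          simpa only [mul_div_assoc] using (integrable_ite_mul_headProd hYm hY1 hN j j).div_const _
    _ = ∑ j ∈ range (n + 1), (∫ ω, (if N ω = j then 1 else 0) * ∏ i, Y i ω ∂P) / c ^ n := by
        refine sum_congr rfl fun j hj => ?_
        have hjn : j ≤ n := Nat.lt_succ_iff.mp (mem_range.mp hj)
        have hpow : c ^ n = c ^ j * c ^ (n - j) := by rw [← pow_add, Nat.add_sub_of_le hjn]
        rw [← integral_ite_mul_headProd_mul_pow hY hYm hY1 hc hN hjn (hindep j hjn), hpow,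
          mul_div_mul_right _ _ (pow_ne_zero _ hc0)]
        simp only [← mul_div_assoc, integral_div]
    _ = 1 := by
        rw [← sum_div, ← integral_eq_sum_ite_mul (g := fun _ ω => ∏ i, Y i ω) hNn
          fun j _ => by simpa [headProd] using integrable_ite_mul_headProd hYm hY1 hN j n,
          hprod, div_self (pow_ne_zero _ hc0)]

end Wald

/-- Wald's identity for the final size `Z` and total infection pressure
`A = λ' Σ_{i=1}^{m+Z} I_i` of the standard stochastic SIR epidemic:
`E[exp (-θ A) / φ(θ λ')^{m+Z}] = 1`, where `φ` is the Laplace transform of the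
i.i.d. infectious periods and, for each `j`, the infectious periods of the
individuals escaping infection are independent of the event `{Z = j}` together
with the infectious periods of the infected individuals. -/
theorem wald_identity_epidemic
    {Ω : Type*} [MeasurableSpace Ω] (P : Measure Ω) [IsProbabilityMeasure P]
    (m k : ℕ) (hm : 1 ≤ m)
    (lam' θ : ℝ) (hlam' : 0 < lam') (hθ : 0 ≤ θ)
    (I : Fin (m + k) → Ω → ℝ)
    (hnonneg : ∀ i ω, 0 ≤ I i ω)
    (hindep : iIndepFun I P)
    (hident : ∀ i, IdentDistrib (I i) (I ⟨0, by omega⟩) P P)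
    (φ : ℝ → ℝ) (hφ : ∀ u, φ u = ∫ ω, Real.exp (-u * I ⟨0, by omega⟩ ω) ∂P)
    (Z : Ω → ℕ) (hZle : ∀ ω, Z ω ≤ k) (hZmeas : Measurable Z)
    (A : Ω → ℝ)
    (hA : ∀ ω, A ω = lam' * ∑ i : Fin (m + k), if (i : ℕ) < m + Z ω then I i ω else 0)
    (hescape : ∀ (j : ℕ) (hj : j ≤ k),
      IndepFun
        (fun ω => fun i : Fin (k - j) => I ⟨m + j + i, by omega⟩ ω)
        (fun ω => ((if Z ω = j then (1:ℝ) else 0),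
          fun i : Fin (m + j) => I ⟨i, by omega⟩ ω)) P) :
    ∫ ω, Real.exp (-θ * A ω) / φ (θ * lam') ^ (m + Z ω) ∂P = 1 := by
  set q := θ * lam'
  have hq : 0 ≤ q := mul_nonneg hθ hlam'.le
  have hf : Measurable fun x => Real.exp (-q * x) := by fun_prop
  have hYm : ∀ i, AEMeasurable (fun ω => Real.exp (-q * I i ω)) P :=
    fun i => hf.comp_aemeasurable (hident i).aemeasurable_fst
  have hY1 : ∀ i ω, |Real.exp (-q * I i ω)| ≤ 1 := fun i ω => by
    rw [Real.abs_exp, Real.exp_le_one_iff]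
    nlinarith [hnonneg i ω]
  have hφq : ∀ i, ∫ ω, Real.exp (-q * I i ω) ∂P = φ q :=
    fun i => ((hident i).comp hf).integral_eq.trans (hφ q).symm
  have hφq0 : φ q ≠ 0 := by
    rw [hφ q]
    exact (integral_exp_pos (.of_bound (hYm _).aestronglyMeasurable 1 (ae_of_all _ (hY1 _)))).ne'
  calc ∫ ω, Real.exp (-θ * A ω) / φ q ^ (m + Z ω) ∂P
      = ∫ ω, headProd (fun i => Real.exp (-q * I i ω)) (m + Z ω) / φ q ^ (m + Z ω) ∂P := by
        congr with ω
        rw [hA, ← exp_neg_mul_sum_ite_eq_headProd, neg_mul, neg_mul, mul_assoc]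
    _ = 1 := integral_headProd_div_pow_eq_one (hindep.comp _ fun _ => hf) hYm hY1 hφq hφq0
        (by fun_prop) (fun ω => by have := hZle ω; omega)
        fun j hj => ?_
  rcases lt_or_ge j m with hjm | hjm
  · have hempty : ∀ ω, m + Z ω ≠ j := fun ω => by omega
    simpa [hempty] using
      indepFun_const_right (μ := P) (fun ω => tailProd (fun i => Real.exp (-q * I i ω)) j) 0
  · obtain ⟨j, rfl⟩ := Nat.exists_eq_add_of_le hjm
    simpa using (hescape j (by omega)).tailProd_mul_headProd (by omega) hf
end
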